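/- In the BP encoding of a binary tree, the parent of a non-root node v (identified with its closing parenthesis) is: close(open(v) − 1) if the symbol at position open(v) − 1 is an opening parenthesis (in which case v is a left child), and open(v) − 1 itself if that symbol is a closing parenthesis (in which case v is a right child). -/

import Mathlib

/-- A binary tree: `leaf` is the empty tree; each internal node has an
optional left and an optional right subtree (possibly `leaf`). -/
inductive BinTree : Type where
  | leaf : BinTree
  | node : BinTree → BinTree → BinTree
deriving DecidableEq

namespace BinTree

/-- Number of nodes of a binary tree. -/
def size : BinTree → ℕ
  | leaf => 0
  | node l r => l.size + r.size + 1

/-- BalancedBP-parenthesis encoding of binary trees: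
`BP(empty) = ε`, `BP(t) = '(' ++ BP(t_l) ++ ')' ++ BP(t_r)`.
`true` is an opening parenthesis, `false` a closing one. -/
def bp : BinTree → List Bool
  | leaf => []
  | node l r => true :: (l.bp ++ false :: r.bp)

/-- The subtree reached by following a path (`false` = left, `true` = right). -/
def subtreeAt : BinTree → List Bool → Option BinTree
  | t, [] => some t
  | leaf, _ :: _ => none
  | node l _, false :: p => subtreeAt l p
  | node _ r, true :: p => subtreeAt r p

/-- A path identifies an actual node of the tree (not an empty slot). -/
def ValidPath (t : BinTree) (p : List Bool) : Prop :=
  ∃ l r, subtreeAt t p = some (node l r)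

/-- Index (0-based) of the opening parenthesis of the node at a path. -/
def openIdx : BinTree → List Bool → Option ℕ
  | leaf, _ => none
  | node _ _, [] => some 0
  | node l _, false :: p => (openIdx l p).map (· + 1)
  | node l r, true :: p => (openIdx r p).map (· + (l.bp.length + 2))

/-- Index (0-based) of the closing parenthesis of the node at a path. -/
def closeIdx : BinTree → List Bool → Option ℕ
  | leaf, _ => none
  | node l _, [] => some (l.bp.length + 1)
  | node l _, false :: p => (closeIdx l p).map (· + 1)
  | node l r, true :: p => (closeIdx r p).map (· + (l.bp.length + 2))

/-- Inorder rank (0-based) of the node at a path. -/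
def inorderIdx : BinTree → List Bool → Option ℕ
  | leaf, _ => none
  | node l _, [] => some l.size
  | node l _, false :: p => inorderIdx l p
  | node l r, true :: p => (inorderIdx r p).map (· + (l.size + 1))

end BinTree

/-- A sequence of parentheses (`true` = '(') is balanced: equally many opening
and closing parentheses, and every prefix has at least as many opening ones. -/
def BalancedBP (s : List Bool) : Prop :=
  s.count true = s.count false ∧
  ∀ k, (s.take k).count false ≤ (s.take k).count true

/-- `excess s k`: number of opening minus closing parentheses among the first `k` symbols. -/
def excess (s : List Bool) (k : ℕ) : ℤ :=
  ((s.take k).count true : ℤ) - ((s.take k).count false : ℤ)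

/-- `IsMatch s i j`: positions `i < j` form a matching pair of parentheses
(the standard stack-based matching). -/
def IsMatch (s : List Bool) (i j : ℕ) : Prop :=
  i < j ∧ j < s.length ∧ s[i]? = some true ∧ s[j]? = some false ∧
  excess s (j + 1) = excess s i ∧
  ∀ k, i < k → k ≤ j → excess s i < excess s k

/-- `EnclosePair s i v j`: `j` is the closing parenthesis whose matching pair
tightly encloses the matching pair `(i, v)`. -/
def EnclosePair (s : List Bool) (i v j : ℕ) : Prop :=
  (∃ i', IsMatch s i' j ∧ i' < i ∧ v < j) ∧
  ∀ i'' j'', IsMatch s i'' j'' → i'' < i → v < j'' → j ≤ j''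

/-- Longest common prefix of two paths. -/
def lcp : List Bool → List Bool → List Bool
  | a :: as, b :: bs => if a = b then a :: lcp as bs else []
  | _, _ => []

/-!
Since `openIdx` follows the recursion of `bp`, the opening parenthesis of a left child `p ++ [false]`
comes right after `open(p)` and that of a right child `p ++ [true]` right after `close(p)`; the symbol
at `open(v) - 1` is thus `'('` or `')'` according to the side of `v`. It remains to see that
`openIdx` and `closeIdx` of a node form a matched pair: each node contributes a block
`'(' · BP(l) · ')'` with `BP(l)` balanced, and a matched pair stays matched when context is added on
either side.
-/

open BinTree

@[simp]
lemma excess_zero (s : List Bool) : excess s 0 = 0 := by simp [excess]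

lemma excess_of_length_le (s : List Bool) {k : ℕ} (h : s.length ≤ k) :
    excess s k = excess s s.length := by
  rw [excess, excess, List.take_of_length_le h, List.take_length]

lemma excess_append_of_le_length (s t : List Bool) {k : ℕ} (h : k ≤ s.length) :
    excess (s ++ t) k = excess s k := by
  rw [excess, excess, List.take_append_of_le_length h]

lemma excess_append_length_add (s t : List Bool) (k : ℕ) :
    excess (s ++ t) (s.length + k) = excess s s.length + excess t k := by
  simp only [excess, List.take_append, List.take_length, Nat.add_sub_cancel_left,
    List.take_of_length_le (Nat.le_add_right s.length k), List.count_append]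
  push_cast
  ring

lemma excess_cons_succ (a : Bool) (s : List Bool) (k : ℕ) :
    excess (a :: s) (k + 1) = (if a then 1 else -1) + excess s k := by
  cases a <;> simp [excess] <;> ring

lemma balancedBP_iff_excess (s : List Bool) :
    BalancedBP s ↔ excess s s.length = 0 ∧ ∀ k, 0 ≤ excess s k := by
  simp only [BalancedBP, excess, List.take_length]
  constructor <;> rintro ⟨htotal, hprefix⟩ <;>
    exact ⟨by omega, fun k => by have := hprefix k; omega⟩

namespace BalancedBP

variable {s t : List Bool}

lemma excess_length (h : BalancedBP s) : excess s s.length = 0 :=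
  ((balancedBP_iff_excess s).1 h).1

lemma excess_nonneg (h : BalancedBP s) (k : ℕ) : 0 ≤ excess s k :=
  ((balancedBP_iff_excess s).1 h).2 k

lemma append (hs : BalancedBP s) (ht : BalancedBP t) : BalancedBP (s ++ t) := by
  refine (balancedBP_iff_excess _).2 ⟨?_, fun k => ?_⟩
  · rw [List.length_append, excess_append_length_add, hs.excess_length, ht.excess_length,
      add_zero]
  · rcases le_or_gt k s.length with hk | hk
    · rw [excess_append_of_le_length _ _ hk]
      exact hs.excess_nonneg k
    · obtain ⟨m, rfl⟩ := Nat.exists_eq_add_of_lt hk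
      rw [add_assoc, excess_append_length_add, hs.excess_length, zero_add]
      exact ht.excess_nonneg _

lemma excess_wrap_pos (h : BalancedBP s) {k : ℕ} (hk0 : 0 < k) (hk : k ≤ s.length + 1) :
    0 < excess (true :: s ++ [false]) k := by
  obtain ⟨k, rfl⟩ := Nat.exists_eq_add_of_lt hk0
  rw [zero_add, List.cons_append, excess_cons_succ, if_pos rfl,
    excess_append_of_le_length _ _ (by omega)]
  linarith [h.excess_nonneg k]

lemma excess_wrap_length (h : BalancedBP s) :
    excess (true :: s ++ [false]) (s.length + 2) = 0 := by
  rw [List.cons_append, excess_cons_succ, if_pos rfl, excess_append_length_add,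
    h.excess_length, excess_cons_succ]
  simp

lemma wrap (h : BalancedBP s) : BalancedBP (true :: s ++ [false]) := by
  refine (balancedBP_iff_excess _).2 ⟨by simpa using h.excess_wrap_length, fun k => ?_⟩
  rcases Nat.eq_zero_or_pos k with rfl | hk0
  · simp
  rcases le_or_gt k (s.length + 1) with hk | hk
  · exact (h.excess_wrap_pos hk0 hk).le
  · have hlen : (true :: s ++ [false]).length ≤ k := by simp; omega
    rw [excess_of_length_le _ hlen, show (true :: s ++ [false]).length = s.length + 2 by simp,
      h.excess_wrap_length]

lemma isMatch_wrap (h : BalancedBP s) : IsMatch (true :: s ++ [false]) 0 (s.length + 1) :=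
  ⟨by omega, by simp, by simp, by simp, by simpa using h.excess_wrap_length,
    fun _ hk0 hk => by simpa using h.excess_wrap_pos hk0 hk⟩

end BalancedBP

namespace BinTree

lemma bp_eq_append (l r : BinTree) :
    (node l r).bp = (true :: l.bp ++ [false]) ++ r.bp := by
  simp [bp]

lemma balancedBP_bp (t : BinTree) : BalancedBP t.bp := by
  induction t with
  | leaf => exact (balancedBP_iff_excess _).2 ⟨by simp [bp], fun k => by simp [bp, excess]⟩
  | node l r ihl ihr => rw [bp_eq_append]; exact ihl.wrap.append ihr

end BinTree

namespace IsMatch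

variable {s : List Bool} {i j : ℕ}

lemma getElem?_left (h : IsMatch s i j) : s[i]? = some true := h.2.2.1

lemma getElem?_right (h : IsMatch s i j) : s[j]? = some false := h.2.2.2.1

lemma append_right (t : List Bool) (h : IsMatch s i j) : IsMatch (s ++ t) i j := by
  obtain ⟨hij, hlen, hi, hj, heq, hlt⟩ := h
  refine ⟨hij, by simp; omega, ?_, ?_, ?_, fun k hk1 hk2 => ?_⟩
  · rwa [List.getElem?_append_left (by omega)]
  · rwa [List.getElem?_append_left hlen]
  · rwa [excess_append_of_le_length _ _ (by omega), excess_append_of_le_length _ _ (by omega)]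
  · rw [excess_append_of_le_length _ _ (by omega), excess_append_of_le_length _ _ (by omega)]
    exact hlt k hk1 hk2

lemma append_left (pre : List Bool) (h : IsMatch s i j) :
    IsMatch (pre ++ s) (i + pre.length) (j + pre.length) := by
  obtain ⟨hij, hlen, hi, hj, heq, hlt⟩ := h
  refine ⟨by omega, by simp; omega, ?_, ?_, ?_, fun k hk1 hk2 => ?_⟩
  · rwa [List.getElem?_append_right (by omega), Nat.add_sub_cancel]
  · rwa [List.getElem?_append_right (by omega), Nat.add_sub_cancel]
  · rw [Nat.add_right_comm, add_comm _ pre.length, add_comm i, excess_append_length_add,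
      excess_append_length_add, heq]
  · obtain ⟨m, rfl⟩ := Nat.exists_eq_add_of_le' (show pre.length ≤ k by omega)
    rw [add_comm i, add_comm m, excess_append_length_add, excess_append_length_add]
    linarith [hlt m (by omega) (by omega)]

end IsMatch

namespace BinTree

lemma isMatch_openIdx_closeIdx (t : BinTree) (p : List Bool) {o c : ℕ}
    (ho : openIdx t p = some o) (hc : closeIdx t p = some c) : IsMatch t.bp o c := by
  induction t generalizing p o c with
  | leaf => simp [openIdx] at ho
  | node l r ihl ihr =>
    rw [bp_eq_append]
    rcases p with _ | ⟨_ | _, p⟩ <;> simp only [openIdx, closeIdx, Option.map_eq_some_iff,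
      Option.some.injEq] at ho hc
    · subst ho hc
      exact (balancedBP_bp l).isMatch_wrap.append_right r.bp
    · obtain ⟨o, ho, rfl⟩ := ho
      obtain ⟨c, hc, rfl⟩ := hc
      simpa using ((ihl p ho hc).append_right (false :: r.bp)).append_left [true]
    · obtain ⟨o, ho, rfl⟩ := ho
      obtain ⟨c, hc, rfl⟩ := hc
      simpa [add_assoc] using (ihr p ho hc).append_left (true :: l.bp ++ [false])

lemma openIdx_append_false {t : BinTree} {p : List Bool} {ov : ℕ}
    (h : openIdx t (p ++ [false]) = some ov) : ∃ o, openIdx t p = some o ∧ ov = o + 1 := by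
  induction t generalizing p ov with
  | leaf => simp [openIdx] at h
  | node l r ihl ihr =>
    rcases p with _ | ⟨_ | _, p⟩ <;>
      simp only [List.nil_append, List.cons_append, openIdx, Option.map_eq_some_iff] at h ⊢
    · obtain ⟨o, ho, rfl⟩ := h
      cases l <;> simp_all [openIdx]
    · obtain ⟨ov', hov', rfl⟩ := h
      obtain ⟨o, ho, rfl⟩ := ihl hov'
      exact ⟨o + 1, ⟨o, ho, rfl⟩, rfl⟩
    · obtain ⟨ov', hov', rfl⟩ := h
      obtain ⟨o, ho, rfl⟩ := ihr hov'
      exact ⟨_, ⟨o, ho, rfl⟩, by omega⟩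

lemma openIdx_append_true {t : BinTree} {p : List Bool} {ov : ℕ}
    (h : openIdx t (p ++ [true]) = some ov) : ∃ c, closeIdx t p = some c ∧ ov = c + 1 := by
  induction t generalizing p ov with
  | leaf => simp [openIdx] at h
  | node l r ihl ihr =>
    rcases p with _ | ⟨_ | _, p⟩ <;>
      simp only [List.nil_append, List.cons_append, openIdx, closeIdx,
        Option.map_eq_some_iff] at h ⊢
    · obtain ⟨o, ho, rfl⟩ := h
      cases r <;> simp_all [openIdx]
    · obtain ⟨ov', hov', rfl⟩ := h
      obtain ⟨c, hc, rfl⟩ := ihl hov'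
      exact ⟨c + 1, ⟨c, hc, rfl⟩, rfl⟩
    · obtain ⟨ov', hov', rfl⟩ := h
      obtain ⟨c, hc, rfl⟩ := ihr hov'
      exact ⟨_, ⟨c, hc, rfl⟩, by omega⟩

lemma exists_openIdx_of_closeIdx {t : BinTree} {p : List Bool} {c : ℕ}
    (h : closeIdx t p = some c) : ∃ o, openIdx t p = some o := by
  induction t generalizing p c with
  | leaf => simp [closeIdx] at h
  | node l r ihl ihr =>
    rcases p with _ | ⟨_ | _, p⟩ <;>
      simp only [openIdx, closeIdx, Option.map_eq_some_iff] at h ⊢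
    · exact ⟨0, rfl⟩
    · obtain ⟨c, hc, rfl⟩ := h
      obtain ⟨o, ho⟩ := ihl hc
      exact ⟨_, o, ho, rfl⟩
    · obtain ⟨c, hc, rfl⟩ := h
      obtain ⟨o, ho⟩ := ihr hc
      exact ⟨_, o, ho, rfl⟩

end BinTree

theorem parent_formula_general (t : BinTree) (p : List Bool) (b : Bool)
    (ov pc : ℕ)
    (hov : BinTree.openIdx t (p ++ [b]) = some ov)
    (hpc : BinTree.closeIdx t p = some pc) :
    (t.bp[ov - 1]? = some true → b = false ∧ IsMatch t.bp (ov - 1) pc) ∧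
    (t.bp[ov - 1]? = some false → b = true ∧ pc = ov - 1) := by
  cases b with
  | false =>
    obtain ⟨o, ho, rfl⟩ := openIdx_append_false hov
    have hmatch := isMatch_openIdx_closeIdx t p ho hpc
    rw [Nat.add_sub_cancel, hmatch.getElem?_left]
    exact ⟨fun _ => ⟨rfl, hmatch⟩, by simp⟩
  | true =>
    obtain ⟨c, hc, rfl⟩ := openIdx_append_true hov
    obtain rfl : pc = c := Option.some.inj (hpc.symm.trans hc)
    obtain ⟨o, ho⟩ := exists_openIdx_of_closeIdx hc
    rw [Nat.add_sub_cancel, (isMatch_openIdx_closeIdx t p ho hc).getElem?_right]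
    exact ⟨by simp, fun _ => ⟨rfl, rfl⟩⟩

/-- the parent of a non-root node `v` is `close (open v - 1)`
when the symbol before `open v` is an opening parenthesis (then `v` is a left
child), and is `open v - 1` itself when it is a closing parenthesis (then `v`
is a right child). -/
theorem parent_formula (t : BinTree) (p : List Bool) (b : Bool)
    (hvalid : BinTree.ValidPath t (p ++ [b]))
    (ov pc : ℕ)
    (hov : BinTree.openIdx t (p ++ [b]) = some ov)
    (hpc : BinTree.closeIdx t p = some pc) :
    (t.bp[ov - 1]? = some true → b = false ∧ IsMatch t.bp (ov - 1) pc) ∧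
    (t.bp[ov - 1]? = some false → b = true ∧ pc = ov - 1) :=
  parent_formula_general t p b ov pc hov hpc
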